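/- arXiv:2008.00771 — 5 statements merged into one kernel-verified Lean document; each statement's English description precedes it below -/
import Mathlib

section
/- Let C be a nonnegative, almost surely finite random variable independent of (Z_i)_{i∈ℤ}, let q ∈ ℕ and δ > 0. Then lim_{n→∞} P( there exist k ∈ {1,…,n} and l ∈ {k−q,…,k+q} with l ≠ k such that C·|Z_k| > δ·a_n and C·|Z_l| > δ·a_n ) = 0. -/
/-!
On the event `C ≤ M` both exceedances force `|Z_k|, |Z_l| > (δ / M) a_n`, so by a union bound over
the at most `2qn` neighbouring pairs and independence, the probability is at most
`P(C > M) + 2q · n · P(|Z_1| > (δ / M) a_n)²`. Regular variation gives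
`n P(|Z_1| > c a_n) → c^{-α}` for every `c > 0`, so the second term tends to `0`; letting `M → ∞`
removes the first one.
-/

open MeasureTheory ProbabilityTheory Filter Topology

section Sequences

lemma tendsto_zero_of_tendsto_natCast_mul {r : ℕ → ℝ} {b : ℝ}
    (h : Tendsto (fun n : ℕ => (n : ℝ) * r n) atTop (𝓝 b)) : Tendsto r atTop (𝓝 0) := by
  refine (h.div_atTop tendsto_natCast_atTop_atTop).congr' ?_
  filter_upwards [eventually_ne_atTop 0] with n hn
  field_simp

lemma tendsto_natCast_mul_sq_zero {r : ℕ → ℝ} {b : ℝ}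
    (h : Tendsto (fun n : ℕ => (n : ℝ) * r n) atTop (𝓝 b)) :
    Tendsto (fun n : ℕ => (n : ℝ) * r n ^ 2) atTop (𝓝 0) := by
  have hlim := h.mul (tendsto_zero_of_tendsto_natCast_mul h)
  rw [mul_zero] at hlim
  exact hlim.congr fun n => by ring

lemma tendsto_zero_of_le_add {u : ℕ → ℝ} {v : ℝ → ℝ} {w : ℝ → ℕ → ℝ} (hu : ∀ n, 0 ≤ u n)
    (hv : Tendsto v atTop (𝓝 0)) (hw : ∀ M > 0, Tendsto (w M) atTop (𝓝 0))
    (hle : ∀ M > 0, ∀ n, u n ≤ v M + w M n) : Tendsto u atTop (𝓝 0) := by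
  refine tendsto_order.2 ⟨fun b hb => .of_forall fun n => hb.trans_le (hu n), fun ε hε => ?_⟩
  obtain ⟨M, hvM, hM⟩ :=
    ((hv.eventually_lt_const (half_pos hε)).and (eventually_gt_atTop 0)).exists
  filter_upwards [(hw M hM).eventually_lt_const (half_pos hε)] with n hn
  linarith [hle M hM n]

end Sequences

section RegularVariation

variable {F L : ℝ → ℝ} {α : ℝ}

lemma tail_pos_of_slowlyVarying (hF : ∀ x > 0, F x = x ^ (-α) * L x)
    (hL : ∀ l > (0 : ℝ), Tendsto (fun x => L (l * x) / L x) atTop (𝓝 1))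
    (hanti : AntitoneOn F (Set.Ioi 0)) (hnn : ∀ x, 0 ≤ F x) {x : ℝ} (hx : 0 < x) : 0 < F x := by
  by_contra! hFx
  have hLzero : ∀ y ≥ x, L y = 0 := by
    intro y hy
    have hy0 : 0 < y := hx.trans_le hy
    have hFy : F y = 0 := le_antisymm ((hanti hx hy0 hy).trans hFx) (hnn y)
    rw [hF y hy0] at hFy
    exact (mul_eq_zero.1 hFy).resolve_left (Real.rpow_pos_of_pos hy0 _).ne'
  have hratio : Tendsto (fun y => L (2 * y) / L y) atTop (𝓝 0) :=
    tendsto_const_nhds.congr' <| by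
      filter_upwards [eventually_ge_atTop x] with y hy
      rw [hLzero y hy, div_zero]
  exact one_ne_zero (tendsto_nhds_unique (hL 2 two_pos) hratio)

lemma tendsto_atTop_of_tendsto_natCast_mul_tail {a : ℕ → ℝ} {b : ℝ} (hpos : ∀ x > 0, 0 < F x)
    (hanti : AntitoneOn F (Set.Ioi 0)) (ha : ∀ n, 0 < a n)
    (hna : Tendsto (fun n : ℕ => (n : ℝ) * F (a n)) atTop (𝓝 b)) : Tendsto a atTop atTop := by
  refine tendsto_atTop.2 fun B => ?_
  have hB : 0 < max B 1 := lt_max_of_lt_right one_pos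
  filter_upwards [(tendsto_zero_of_tendsto_natCast_mul hna).eventually_lt_const (hpos _ hB)]
    with n hn
  by_contra! hlt
  exact (hanti (ha n) hB (hlt.le.trans (le_max_left _ _))).not_gt hn

lemma tendsto_natCast_mul_tail_const_mul (hF : ∀ x > 0, F x = x ^ (-α) * L x)
    (hL : ∀ l > (0 : ℝ), Tendsto (fun x => L (l * x) / L x) atTop (𝓝 1))
    (hpos : ∀ x > 0, 0 < F x) {a : ℕ → ℝ} {b : ℝ} (ha : ∀ n, 0 < a n)
    (ha_top : Tendsto a atTop atTop) (hna : Tendsto (fun n : ℕ => (n : ℝ) * F (a n)) atTop (𝓝 b))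
    {c : ℝ} (hc : 0 < c) :
    Tendsto (fun n : ℕ => (n : ℝ) * F (c * a n)) atTop (𝓝 (c ^ (-α) * b)) := by
  have hlim := ((tendsto_const_nhds (x := c ^ (-α))).mul hna).mul ((hL c hc).comp ha_top)
  rw [mul_one] at hlim
  refine hlim.congr fun n => ?_
  have hLa : L (a n) ≠ 0 := by
    have hFa := hpos (a n) (ha n)
    rw [hF _ (ha n)] at hFa
    exact right_ne_zero_of_mul hFa.ne'
  simp only [Function.comp_apply, hF _ (ha n), hF _ (mul_pos hc (ha n)),
    Real.mul_rpow hc.le (ha n).le]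
  field_simp

end RegularVariation

lemma card_erase_Icc_sub_add (k : ℤ) (q : ℕ) :
    ((Finset.Icc (k - q) (k + q)).erase k).card = 2 * q := by
  rw [Finset.card_erase_of_mem (Finset.mem_Icc.2 ⟨by omega, by omega⟩), Int.card_Icc]
  omega

section NeighbourPairs

variable {Ω : Type*} {Z : ℤ → Ω → ℝ}

lemma setOf_exists_neighbour_pair_subset (C : Ω → ℝ) (n q : ℕ) (t : ℝ) {M : ℝ} (hM : 0 < M) :
    {ω | ∃ k ∈ Finset.Icc (1 : ℤ) n, ∃ l ∈ Finset.Icc (k - q) (k + q),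
        l ≠ k ∧ t < C ω * |Z k ω| ∧ t < C ω * |Z l ω|} ⊆
      {ω | M < C ω} ∪ ⋃ k ∈ Finset.Icc (1 : ℤ) n, ⋃ l ∈ (Finset.Icc (k - q) (k + q)).erase k,
        {ω | t / M < |Z k ω|} ∩ {ω | t / M < |Z l ω|} := by
  rintro ω ⟨k, hk, l, hl, hlk, hZk, hZl⟩
  by_cases hC : M < C ω
  · exact Or.inl hC
  have hlarge : ∀ i, t < C ω * |Z i ω| → t / M < |Z i ω| := fun i hi => by
    rw [div_lt_iff₀' hM]
    exact hi.trans_le (by gcongr; exact not_lt.1 hC)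
  simp only [Set.mem_union, Set.mem_iUnion, Set.mem_inter_iff]
  exact Or.inr ⟨k, hk, l, Finset.mem_erase.2 ⟨hlk, hl⟩, hlarge k hZk, hlarge l hZl⟩

variable [MeasurableSpace Ω] {P : Measure Ω}

lemma measureReal_abs_gt_inter_abs_gt (hindep : iIndepFun Z P)
    (hident : ∀ i, IdentDistrib (Z i) (Z 1) P P) {k l : ℤ} (hkl : k ≠ l) (s : ℝ) :
    P.real ({ω | s < |Z k ω|} ∩ {ω | s < |Z l ω|}) = P.real {ω | s < |Z 1 ω|} ^ 2 := by
  have hS : MeasurableSet {x : ℝ | s < |x|} := measurableSet_lt measurable_const measurable_id.abs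
  show P.real (Z k ⁻¹' {x | s < |x|} ∩ Z l ⁻¹' {x | s < |x|}) =
    P.real (Z 1 ⁻¹' {x | s < |x|}) ^ 2
  rw [measureReal_def, (hindep.indepFun hkl).measure_inter_preimage_eq_mul _ _ hS hS,
    (hident k).measure_mem_eq hS, (hident l).measure_mem_eq hS, ENNReal.toReal_mul, sq]
  rfl

lemma measureReal_biUnion_neighbour_pairs_le (hindep : iIndepFun Z P)
    (hident : ∀ i, IdentDistrib (Z i) (Z 1) P P) (n q : ℕ) (s : ℝ) :
    P.real (⋃ k ∈ Finset.Icc (1 : ℤ) n, ⋃ l ∈ (Finset.Icc (k - q) (k + q)).erase k,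
        {ω | s < |Z k ω|} ∩ {ω | s < |Z l ω|}) ≤
      n * (2 * q) * P.real {ω | s < |Z 1 ω|} ^ 2 := by
  calc _ ≤ ∑ k ∈ Finset.Icc (1 : ℤ) n, ∑ l ∈ (Finset.Icc (k - q) (k + q)).erase k,
          P.real ({ω | s < |Z k ω|} ∩ {ω | s < |Z l ω|}) :=
        (measureReal_biUnion_finset_le _ _).trans
          (Finset.sum_le_sum fun k _ => measureReal_biUnion_finset_le _ _)
    _ = _ := by
      rw [Finset.sum_congr rfl fun k _ => Finset.sum_congr rfl fun l hl =>
        measureReal_abs_gt_inter_abs_gt hindep hident (Finset.ne_of_mem_erase hl).symm s]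
      simp only [Finset.sum_const, card_erase_Icc_sub_add, Int.card_Icc, add_sub_cancel_right,
        Int.toNat_natCast, nsmul_eq_mul]
      push_cast
      ring

variable [IsFiniteMeasure P]

lemma tendsto_measureReal_lt_atTop {X : Ω → ℝ} (hX : Measurable X) :
    Tendsto (fun M : ℝ => P.real {ω | M < X ω}) atTop (𝓝 0) := by
  have h := tendsto_measure_iInter_atTop (μ := P) (s := fun M : ℝ => {ω | M < X ω})
    (fun M => (measurableSet_lt measurable_const hX).nullMeasurableSet)
    (fun M N hMN ω hω => hMN.trans_lt hω) ⟨0, measure_ne_top P _⟩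
  have hempty : ⋂ M : ℝ, {ω | M < X ω} = ∅ :=
    Set.iInter_eq_empty_iff.2 fun ω => ⟨X ω, by simp⟩
  rw [hempty, measure_empty] at h
  exact (ENNReal.tendsto_toReal ENNReal.zero_ne_top).comp h

lemma measureReal_exists_neighbour_pair_le (hindep : iIndepFun Z P)
    (hident : ∀ i, IdentDistrib (Z i) (Z 1) P P) (C : Ω → ℝ) (n q : ℕ) (t : ℝ) {M : ℝ}
    (hM : 0 < M) :
    P.real {ω | ∃ k ∈ Finset.Icc (1 : ℤ) n, ∃ l ∈ Finset.Icc (k - q) (k + q),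
        l ≠ k ∧ t < C ω * |Z k ω| ∧ t < C ω * |Z l ω|} ≤
      P.real {ω | M < C ω} + n * (2 * q) * P.real {ω | t / M < |Z 1 ω|} ^ 2 :=
  (measureReal_mono (setOf_exists_neighbour_pair_subset C n q t hM)).trans <|
    (measureReal_union_le _ _).trans <|
      add_le_add_right (measureReal_biUnion_neighbour_pairs_le hindep hident n q _) _

end NeighbourPairs

theorem stmt3_general
    {Ω : Type*} [MeasurableSpace Ω] (P : Measure Ω) [IsProbabilityMeasure P]
    (Z : ℤ → Ω → ℝ)
    (hZindep : iIndepFun Z P)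
    (hZident : ∀ i, IdentDistrib (Z i) (Z 1) P P)
    (α : ℝ) (L : ℝ → ℝ)
    (hreg : ∀ x > (0 : ℝ), (P {ω | x < |Z 1 ω|}).toReal = x ^ (-α) * L x)
    (hL : ∀ l > (0 : ℝ), Tendsto (fun x => L (l * x) / L x) atTop (nhds 1))
    (a : ℕ → ℝ) (ha : ∀ n, 0 < a n)
    (hna : Tendsto (fun n : ℕ => (n : ℝ) * (P {ω | a n < |Z 1 ω|}).toReal) atTop (nhds 1))
    (C : Ω → ℝ) (hCmeas : Measurable C)
    (q : ℕ) (δ : ℝ) (hδ : 0 < δ) :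
    Tendsto
      (fun n : ℕ =>
        (P {ω | ∃ k ∈ Finset.Icc (1 : ℤ) (n : ℤ), ∃ l ∈ Finset.Icc (k - q) (k + q),
            l ≠ k ∧ δ * a n < C ω * |Z k ω| ∧ δ * a n < C ω * |Z l ω|}).toReal)
      atTop (nhds 0) := by
  have hanti : AntitoneOn (fun x => P.real {ω | x < |Z 1 ω|}) (Set.Ioi 0) :=
    fun x _ y _ hxy => measureReal_mono fun ω hω => hxy.trans_lt hω
  have hpos : ∀ x > 0, 0 < P.real {ω | x < |Z 1 ω|} := fun x hx =>
    tail_pos_of_slowlyVarying hreg hL hanti (fun _ => measureReal_nonneg) hx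
  have ha_top : Tendsto a atTop atTop :=
    tendsto_atTop_of_tendsto_natCast_mul_tail hpos hanti ha hna
  have hpairs : ∀ M > 0, Tendsto
      (fun n : ℕ => n * (2 * q) * P.real {ω | δ * a n / M < |Z 1 ω|} ^ 2) atTop (𝓝 0) := by
    intro M hM
    have hlim := (tendsto_natCast_mul_sq_zero <|
      tendsto_natCast_mul_tail_const_mul hreg hL hpos ha ha_top hna (div_pos hδ hM)).const_mul
        (2 * q : ℝ)
    rw [mul_zero] at hlim
    exact hlim.congr fun n => by rw [mul_div_right_comm, measureReal_def]; ring
  exact tendsto_zero_of_le_add (fun n => measureReal_nonneg) (tendsto_measureReal_lt_atTop hCmeas)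
    hpairs fun M hM n => measureReal_exists_neighbour_pair_le hZindep hZident C n q (δ * a n) hM

/-- For C nonnegative, a.s. finite, independent of (Z_i), q ∈ ℕ and δ > 0,
the probability that there exist k ∈ {1,…,n} and l ∈ {k-q,…,k+q}, l ≠ k, with
C·|Z_k| > δ·a_n and C·|Z_l| > δ·a_n tends to 0 as n → ∞. -/
theorem stmt3
    {Ω : Type*} [MeasurableSpace Ω] (P : Measure Ω) [IsProbabilityMeasure P]
    (Z : ℤ → Ω → ℝ) (hZmeas : ∀ i, Measurable (Z i))
    (hZindep : iIndepFun Z P)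
    (hZident : ∀ i, IdentDistrib (Z i) (Z 1) P P)
    (α : ℝ) (hα : 0 < α) (L : ℝ → ℝ)
    (hreg : ∀ x > (0 : ℝ), (P {ω | x < |Z 1 ω|}).toReal = x ^ (-α) * L x)
    (hL : ∀ l > (0 : ℝ), Tendsto (fun x => L (l * x) / L x) atTop (nhds 1))
    (a : ℕ → ℝ) (ha : ∀ n, 0 < a n)
    (hna : Tendsto (fun n : ℕ => (n : ℝ) * (P {ω | a n < |Z 1 ω|}).toReal) atTop (nhds 1))
    (C : Ω → ℝ) (hCmeas : Measurable C) (hCnonneg : ∀ ω, 0 ≤ C ω)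
    (hCZindep : Indep (MeasurableSpace.comap C Real.measurableSpace)
      (⨆ i, MeasurableSpace.comap (Z i) Real.measurableSpace) P)
    (q : ℕ) (δ : ℝ) (hδ : 0 < δ) :
    Tendsto
      (fun n : ℕ =>
        (P {ω | ∃ k ∈ Finset.Icc (1 : ℤ) (n : ℤ), ∃ l ∈ Finset.Icc (k - q) (k + q),
            l ≠ k ∧ δ * a n < C ω * |Z k ω| ∧ δ * a n < C ω * |Z l ω|}).toReal)
      atTop (nhds 0) :=
  stmt3_general P Z hZindep hZident α L hreg hL a ha hna C hCmeas q δ hδ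
end

section
/- Let C be a nonnegative, almost surely finite random variable independent of (Z_i)_{i∈ℤ}, let q ∈ ℕ and δ > 0. Then lim_{n→∞} P( there exist k ∈ {1,…,n}, j ∈ {1,…,n} \ {k,…,k+q}, l₁ ∈ {0,…,q} and l ∈ {0,…,q} with l ≠ l₁ such that C·|Z_k| > δ·a_n, C·|Z_{j−l₁}| > δ·a_n and C·|Z_{j−l}| > δ·a_n ) = 0. -/
/-!
Outside the event `{M < C}`, whose probability is small for large `M` since `C` is finite, each of
the three exceedances forces `|Z_i| > (δ / M) a_n`. Since `j ∉ [k, k + q]` and `l ≠ l₁`, the indices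
`k`, `j - l₁`, `j - l` are distinct, so by independence each of the at most `n² (q + 1)²` index
choices has probability `p_n³` with `p_n = P(|Z_1| > (δ / M) a_n)`. Regular variation and
`a_n → ∞` give `n p_n → (δ / M)^(-α)`, hence `n² p_n³ → 0`.
-/

open MeasureTheory ProbabilityTheory Filter Finset Topology

def IsSlowlyVarying (L : ℝ → ℝ) : Prop :=
  ∀ l > (0 : ℝ), Tendsto (fun x => L (l * x) / L x) atTop (𝓝 1)

theorem IsSlowlyVarying.eventually_ne_zero {L : ℝ → ℝ} (hL : IsSlowlyVarying L) :
    ∀ᶠ x in atTop, L x ≠ 0 :=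
  ((hL 2 two_pos).eventually (eventually_ne_nhds one_ne_zero)).mono
    fun x hx hLx => hx (by rw [hLx, div_zero])

section RegularVariation

variable {f L : ℝ → ℝ} {α : ℝ} {a : ℕ → ℝ}

theorem pos_of_antitone_of_slowlyVarying (hf : Antitone f) (hf₀ : ∀ x, 0 ≤ f x)
    (hfL : ∀ x > 0, f x = x ^ (-α) * L x) (hL : IsSlowlyVarying L) (x : ℝ) : 0 < f x := by
  obtain ⟨y, hLy, hy⟩ := (hL.eventually_ne_zero.and (eventually_ge_atTop (max x 1))).exists
  have hy₀ : 0 < y := lt_of_lt_of_le one_pos ((le_max_right x 1).trans hy)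
  have hfy : f y ≠ 0 := by
    rw [hfL y hy₀]
    exact mul_ne_zero (Real.rpow_pos_of_pos hy₀ _).ne' hLy
  exact (lt_of_le_of_ne (hf₀ y) hfy.symm).trans_le (hf ((le_max_left x 1).trans hy))

theorem tendsto_atTop_of_tendsto_natCast_mul (hf : Antitone f) (hpos : ∀ x, 0 < f x) {y : ℝ}
    (h : Tendsto (fun n : ℕ => n * f (a n)) atTop (𝓝 y)) : Tendsto a atTop atTop := by
  refine tendsto_atTop.2 fun b => ?_
  have hlarge : ∀ᶠ n : ℕ in atTop, y + 1 ≤ n * f b :=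
    (tendsto_natCast_atTop_atTop.atTop_mul_const (hpos b)).eventually_ge_atTop _
  filter_upwards [h.eventually (gt_mem_nhds (lt_add_one y)), hlarge] with n hsmall hlarge
  by_contra! hab
  have : (n : ℝ) * f b ≤ n * f (a n) := by gcongr; exact hf hab.le
  linarith

theorem tendsto_natCast_mul_comp_const_mul (hfL : ∀ x > 0, f x = x ^ (-α) * L x)
    (hL : IsSlowlyVarying L) (ha : ∀ n, 0 < a n) (ha_top : Tendsto a atTop atTop)
    (hna : Tendsto (fun n : ℕ => n * f (a n)) atTop (𝓝 1)) {c : ℝ} (hc : 0 < c) :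
    Tendsto (fun n : ℕ => n * f (c * a n)) atTop (𝓝 (c ^ (-α))) := by
  have hlim := (hna.mul ((hL c hc).comp ha_top)).const_mul (c ^ (-α))
  rw [mul_one, mul_one] at hlim
  refine hlim.congr' ?_
  filter_upwards [hna.eventually (eventually_ne_nhds one_ne_zero)] with n hn
  have hLa : L (a n) ≠ 0 := by
    intro h0
    rw [hfL _ (ha n), h0, mul_zero, mul_zero] at hn
    exact hn rfl
  simp only [Function.comp_apply]
  rw [hfL _ (ha n), hfL _ (mul_pos hc (ha n)), Real.mul_rpow hc.le (ha n).le]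
  field_simp

theorem tendsto_natCast_sq_mul_pow_three {p : ℕ → ℝ} {y : ℝ}
    (h : Tendsto (fun n : ℕ => n * p n) atTop (𝓝 y)) :
    Tendsto (fun n : ℕ => (n : ℝ) ^ 2 * p n ^ 3) atTop (𝓝 0) := by
  have hlim := (h.pow 3).mul (tendsto_one_div_atTop_nhds_zero_nat (𝕜 := ℝ))
  rw [mul_zero] at hlim
  refine hlim.congr' ?_
  filter_upwards [eventually_ne_atTop 0] with n hn
  have : (n : ℝ) ≠ 0 := Nat.cast_ne_zero.2 hn
  field_simp

end RegularVariation

theorem tendsto_measureReal_lt_atTop_s4 {Ω : Type*} [MeasurableSpace Ω] {μ : Measure Ω}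
    [IsFiniteMeasure μ] {C : Ω → ℝ} (hC : Measurable C) :
    Tendsto (fun M : ℝ => μ.real {ω | M < C ω}) atTop (𝓝 0) := by
  have h := tendsto_measure_iInter_atTop (μ := μ) (s := fun M : ℝ => {ω | M < C ω})
    (fun M => (measurableSet_lt measurable_const hC).nullMeasurableSet)
    (fun M M' hM ω hω => hM.trans_lt hω) ⟨0, measure_ne_top _ _⟩
  have hempty : (⋂ M : ℝ, {ω | M < C ω}) = ∅ :=
    Set.eq_empty_of_forall_notMem fun ω hω => lt_irrefl (C ω) (Set.mem_iInter.1 hω (C ω) :)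
  rw [hempty, measure_empty] at h
  exact (ENNReal.tendsto_toReal ENNReal.zero_ne_top).comp h

theorem measure_preimage_inter_inter_eq_pow {Ω ι : Type*} [MeasurableSpace Ω] [DecidableEq ι]
    {P : Measure Ω} {Z : ι → Ω → ℝ} (hZindep : iIndepFun Z P) {i₀ : ι}
    (hZident : ∀ i, IdentDistrib (Z i) (Z i₀) P P) {i j k : ι} (hij : i ≠ j) (hik : i ≠ k)
    (hjk : j ≠ k) {B : Set ℝ} (hB : MeasurableSet B) :
    P (Z i ⁻¹' B ∩ Z j ⁻¹' B ∩ Z k ⁻¹' B) = P (Z i₀ ⁻¹' B) ^ 3 := by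
  have h := hZindep.meas_biInter (S := {i, j, k}) (s := fun m => Z m ⁻¹' B)
    fun m _ => ⟨B, hB, rfl⟩
  rw [Finset.set_biInter_insert, Finset.set_biInter_insert, Finset.set_biInter_singleton,
    ← Set.inter_assoc, prod_insert (by simp [hij, hik]), prod_insert (by simp [hjk]),
    prod_singleton] at h
  rw [h, (hZident i).measure_mem_eq hB, (hZident j).measure_mem_eq hB,
    (hZident k).measure_mem_eq hB]
  ring

noncomputable def windowIndices (n q : ℕ) : Finset (ℤ × ℤ × ℤ × ℤ) :=
  (Icc (1 : ℤ) n ×ˢ Icc (1 : ℤ) n ×ˢ Icc (0 : ℤ) q ×ˢ Icc (0 : ℤ) q).filter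
    fun x => x.2.1 ∉ Icc x.1 (x.1 + q) ∧ x.2.2.2 ≠ x.2.2.1

theorem card_windowIndices_le (n q : ℕ) : #(windowIndices n q) ≤ n ^ 2 * (q + 1) ^ 2 := by
  refine (card_filter_le _ _).trans_eq ?_
  simp only [card_product, Int.card_Icc]
  rw [show ((n : ℤ) + 1 - 1).toNat = n by omega, show ((q : ℤ) + 1 - 0).toNat = q + 1 by omega]
  ring

section Exceedance

variable {Ω : Type*}

def windowExceedance (Z : ℤ → Ω → ℝ) (t : ℝ) (x : ℤ × ℤ × ℤ × ℤ) : Set Ω :=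
  Z x.1 ⁻¹' {y | t < |y|} ∩ Z (x.2.1 - x.2.2.1) ⁻¹' {y | t < |y|} ∩
    Z (x.2.1 - x.2.2.2) ⁻¹' {y | t < |y|}

def tripleExceedance (Z : ℤ → Ω → ℝ) (C : Ω → ℝ) (n q : ℕ) (u : ℝ) : Set Ω :=
  {ω | ∃ k ∈ Icc (1 : ℤ) (n : ℤ), ∃ j ∈ Icc (1 : ℤ) (n : ℤ), j ∉ Icc k (k + q) ∧
    ∃ l₁ ∈ Icc (0 : ℤ) (q : ℤ), ∃ l ∈ Icc (0 : ℤ) (q : ℤ), l ≠ l₁ ∧ u < C ω * |Z k ω| ∧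
    u < C ω * |Z (j - l₁) ω| ∧ u < C ω * |Z (j - l) ω|}

theorem tripleExceedance_subset (Z : ℤ → Ω → ℝ) (C : Ω → ℝ) (n q : ℕ) (u : ℝ) {M : ℝ}
    (hM : 0 < M) :
    tripleExceedance Z C n q u ⊆
      {ω | M < C ω} ∪ ⋃ x ∈ windowIndices n q, windowExceedance Z (u / M) x := by
  rintro ω ⟨k, hk, j, hj, hjk, l₁, hl₁, l, hl, hne, h₁, h₂, h₃⟩
  rcases lt_or_ge M (C ω) with hCM | hCM
  · exact Or.inl hCM
  have hexceed : ∀ i, u < C ω * |Z i ω| → u / M < |Z i ω| := fun i h => by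
    rw [div_lt_iff₀' hM]
    exact h.trans_le (mul_le_mul_of_nonneg_right hCM (abs_nonneg _))
  have hx : (k, j, l₁, l) ∈ windowIndices n q :=
    mem_filter.2 ⟨mem_product.2 ⟨hk, mem_product.2 ⟨hj, mem_product.2 ⟨hl₁, hl⟩⟩⟩, hjk, hne⟩
  exact Or.inr (Set.mem_biUnion hx ⟨⟨hexceed _ h₁, hexceed _ h₂⟩, hexceed _ h₃⟩)

theorem measureReal_windowExceedance [MeasurableSpace Ω] {P : Measure Ω} {Z : ℤ → Ω → ℝ}
    (hZindep : iIndepFun Z P) (hZident : ∀ i, IdentDistrib (Z i) (Z 1) P P) {n q : ℕ}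
    {x : ℤ × ℤ × ℤ × ℤ} (hx : x ∈ windowIndices n q) (t : ℝ) :
    P.real (windowExceedance Z t x) = P.real {ω | t < |Z 1 ω|} ^ 3 := by
  obtain ⟨k, j, l₁, l⟩ := x
  simp only [windowIndices, mem_filter, mem_product, mem_Icc] at hx
  have hkj₁ : k ≠ j - l₁ := by omega
  have hkj : k ≠ j - l := by omega
  have hj₁j : j - l₁ ≠ j - l := by omega
  rw [windowExceedance, measureReal_def, measure_preimage_inter_inter_eq_pow hZindep hZident
    hkj₁ hkj hj₁j (measurableSet_lt measurable_const measurable_abs), ENNReal.toReal_pow]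
  rfl

theorem measureReal_tripleExceedance_le [MeasurableSpace Ω] {P : Measure Ω} [IsFiniteMeasure P]
    {Z : ℤ → Ω → ℝ} (hZindep : iIndepFun Z P) (hZident : ∀ i, IdentDistrib (Z i) (Z 1) P P)
    (C : Ω → ℝ) (n q : ℕ) (u : ℝ) {M : ℝ} (hM : 0 < M) :
    P.real (tripleExceedance Z C n q u) ≤
      P.real {ω | M < C ω} + n ^ 2 * (q + 1) ^ 2 * P.real {ω | u / M < |Z 1 ω|} ^ 3 := by
  calc P.real (tripleExceedance Z C n q u)
      ≤ P.real {ω | M < C ω} + ∑ x ∈ windowIndices n q, P.real (windowExceedance Z (u / M) x) :=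
        (measureReal_mono (tripleExceedance_subset Z C n q u hM)).trans
          ((measureReal_union_le _ _).trans
            (add_le_add_right (measureReal_biUnion_finset_le _ _) _))
    _ = P.real {ω | M < C ω} + #(windowIndices n q) * P.real {ω | u / M < |Z 1 ω|} ^ 3 := by
        rw [sum_congr rfl fun x hx => measureReal_windowExceedance hZindep hZident hx (u / M),
          sum_const, nsmul_eq_mul]
    _ ≤ _ := by
        gcongr
        exact_mod_cast card_windowIndices_le n q

end Exceedance

theorem stmt4_general
    {Ω : Type*} [MeasurableSpace Ω] (P : Measure Ω) [IsProbabilityMeasure P]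
    (Z : ℤ → Ω → ℝ)
    (hZindep : iIndepFun Z P)
    (hZident : ∀ i, IdentDistrib (Z i) (Z 1) P P)
    (α : ℝ) (L : ℝ → ℝ)
    (hreg : ∀ x > (0 : ℝ), (P {ω | x < |Z 1 ω|}).toReal = x ^ (-α) * L x)
    (hL : ∀ l > (0 : ℝ), Tendsto (fun x => L (l * x) / L x) atTop (nhds 1))
    (a : ℕ → ℝ) (ha : ∀ n, 0 < a n)
    (hna : Tendsto (fun n : ℕ => (n : ℝ) * (P {ω | a n < |Z 1 ω|}).toReal) atTop (nhds 1))
    (C : Ω → ℝ) (hCmeas : Measurable C)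
    (q : ℕ) (δ : ℝ) (hδ : 0 < δ) :
    Tendsto
      (fun n : ℕ =>
        (P {ω | ∃ k ∈ Finset.Icc (1 : ℤ) (n : ℤ),
            ∃ j ∈ Finset.Icc (1 : ℤ) (n : ℤ), j ∉ Finset.Icc k (k + q) ∧
            ∃ l₁ ∈ Finset.Icc (0 : ℤ) (q : ℤ), ∃ l ∈ Finset.Icc (0 : ℤ) (q : ℤ),
            l ≠ l₁ ∧ δ * a n < C ω * |Z k ω| ∧
            δ * a n < C ω * |Z (j - l₁) ω| ∧ δ * a n < C ω * |Z (j - l) ω|}).toReal)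
      atTop (nhds 0) := by
  have htail_anti : Antitone fun x : ℝ => P.real {ω | x < |Z 1 ω|} :=
    fun x y hxy => measureReal_mono fun ω hω => hxy.trans_lt hω
  have htail_pos :=
    pos_of_antitone_of_slowlyVarying htail_anti (fun _ => measureReal_nonneg) hreg hL
  have ha_top := tendsto_atTop_of_tendsto_natCast_mul htail_anti htail_pos hna
  refine tendsto_order.2 ⟨fun e he => .of_forall fun n => he.trans_le ENNReal.toReal_nonneg,
    fun ε hε => ?_⟩
  obtain ⟨M, hCM, hM⟩ : ∃ M : ℝ, P.real {ω | M < C ω} < ε / 2 ∧ 0 < M :=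
    (((tendsto_measureReal_lt_atTop_s4 hCmeas).eventually (gt_mem_nhds (half_pos hε))).and
      (eventually_gt_atTop 0)).exists
  have hwindows : Tendsto (fun n : ℕ =>
      (n : ℝ) ^ 2 * (q + 1) ^ 2 * P.real {ω | δ / M * a n < |Z 1 ω|} ^ 3) atTop (𝓝 0) := by
    have h := (tendsto_natCast_sq_mul_pow_three (tendsto_natCast_mul_comp_const_mul hreg hL ha
      ha_top hna (div_pos hδ hM))).const_mul (((q : ℝ) + 1) ^ 2)
    rw [mul_zero] at h
    exact h.congr fun n => by rw [measureReal_def]; ring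
  filter_upwards [hwindows.eventually (gt_mem_nhds (half_pos hε))] with n hn
  calc P.real (tripleExceedance Z C n q (δ * a n))
      ≤ P.real {ω | M < C ω} + n ^ 2 * (q + 1) ^ 2 * P.real {ω | δ * a n / M < |Z 1 ω|} ^ 3 :=
        measureReal_tripleExceedance_le hZindep hZident C n q _ hM
    _ < ε := by rw [mul_div_right_comm]; linarith

/-- For C nonnegative, a.s. finite, independent of (Z_i), q ∈ ℕ and δ > 0,
the probability that there exist k ∈ {1,…,n}, j ∈ {1,…,n} \ {k,…,k+q}, l₁ ∈ {0,…,q}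
and l ∈ {0,…,q}, l ≠ l₁, with C·|Z_k| > δ·a_n, C·|Z_{j-l₁}| > δ·a_n and
C·|Z_{j-l}| > δ·a_n tends to 0 as n → ∞. -/
theorem stmt4
    {Ω : Type*} [MeasurableSpace Ω] (P : Measure Ω) [IsProbabilityMeasure P]
    (Z : ℤ → Ω → ℝ) (hZmeas : ∀ i, Measurable (Z i))
    (hZindep : iIndepFun Z P)
    (hZident : ∀ i, IdentDistrib (Z i) (Z 1) P P)
    (α : ℝ) (hα : 0 < α) (L : ℝ → ℝ)
    (hreg : ∀ x > (0 : ℝ), (P {ω | x < |Z 1 ω|}).toReal = x ^ (-α) * L x)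
    (hL : ∀ l > (0 : ℝ), Tendsto (fun x => L (l * x) / L x) atTop (nhds 1))
    (a : ℕ → ℝ) (ha : ∀ n, 0 < a n)
    (hna : Tendsto (fun n : ℕ => (n : ℝ) * (P {ω | a n < |Z 1 ω|}).toReal) atTop (nhds 1))
    (C : Ω → ℝ) (hCmeas : Measurable C) (hCnonneg : ∀ ω, 0 ≤ C ω)
    (hCZindep : Indep (MeasurableSpace.comap C Real.measurableSpace)
      (⨆ i, MeasurableSpace.comap (Z i) Real.measurableSpace) P)
    (q : ℕ) (δ : ℝ) (hδ : 0 < δ) :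
    Tendsto
      (fun n : ℕ =>
        (P {ω | ∃ k ∈ Finset.Icc (1 : ℤ) (n : ℤ),
            ∃ j ∈ Finset.Icc (1 : ℤ) (n : ℤ), j ∉ Finset.Icc k (k + q) ∧
            ∃ l₁ ∈ Finset.Icc (0 : ℤ) (q : ℤ), ∃ l ∈ Finset.Icc (0 : ℤ) (q : ℤ),
            l ≠ l₁ ∧ δ * a n < C ω * |Z k ω| ∧
            δ * a n < C ω * |Z (j - l₁) ω| ∧ δ * a n < C ω * |Z (j - l) ω|}).toReal)
      atTop (nhds 0) :=
  stmt4_general P Z hZindep hZident α L hreg hL a ha hna C hCmeas q δ hδ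
end

section
/- Let (C_j)_{j≥0} be a sequence of real random variables, independent of (Z_i)_{i∈ℤ}, such that C_+ := sup_{j≥0}(C_j ∨ 0) and C_− := sup_{j≥0}((−C_j) ∨ 0) are almost surely finite. Then for every x > 0, lim_{n→∞} P( max_{1≤i≤n} (|Z_i|/a_n)·( C_+·1_{{Z_i>0}} + C_−·1_{{Z_i<0}} ) ≤ x ) = E[ exp( −x^{−α}·( p·C_+^α + r·C_−^α ) ) ]. -/
/-!
Conditionally on `(C₊, C₋) = (c, d)`, which is independent of the i.i.d. sequence `Zᵢ`, the
probability in question is `μ(Eₙ)ⁿ` for the law `μ` of `Z₁`, where the complement of `Eₙ` is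
`{x aₙ < c Z₁} ∪ {x aₙ < -d Z₁}`. Regular variation turns the normalisation `n P(|Z₁| > aₙ) → 1`
into `n P(Z₁ > u aₙ) → p u^{-α}` and `n P(Z₁ < -u aₙ) → r u^{-α}`, hence
`n μ(Eₙᶜ) → x^{-α} (p c^α + r d^α)` and `μ(Eₙ)ⁿ → exp (-x^{-α} (p c^α + r d^α))`.
Bounded convergence integrates this over the law of `(C₊, C₋)`.
-/

open MeasureTheory ProbabilityTheory Filter Set Topology
open scoped ENNReal

section RegularVariation

variable {T L G : ℝ → ℝ} {α : ℝ}

lemma Antitone.pos_of_eventually_ne_zero (hT : Antitone T) (hT0 : ∀ t, 0 ≤ T t)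
    (h : ∀ᶠ s in atTop, T s ≠ 0) (t : ℝ) : 0 < T t := by
  obtain ⟨s, hs, hts⟩ := (h.and (eventually_ge_atTop t)).exists
  exact ((hT0 s).lt_of_ne' hs).trans_le (hT hts)

lemma Antitone.tendsto_atTop_of_tendsto_nat_mul (hT : Antitone T) (hTpos : ∀ t, 0 < T t)
    {a : ℕ → ℝ} {l : ℝ} (hna : Tendsto (fun n : ℕ => n * T (a n)) atTop (𝓝 l)) :
    Tendsto a atTop atTop := by
  have hTa : Tendsto (fun n => T (a n)) atTop (𝓝 0) := by
    simpa using (hna.mul tendsto_inv_atTop_nhds_zero_nat).congr'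
      ((eventually_ne_atTop 0).mono fun n hn => by field_simp)
  refine tendsto_atTop.2 fun M => (hTa.eventually_lt_const (hTpos M)).mono fun n hn => ?_
  exact not_lt.1 fun hlt => (hT hlt.le).not_gt hn

lemma tendsto_nat_mul_comp_const_mul (hT : Antitone T) (hT0 : ∀ t, 0 ≤ T t)
    (hreg : ∀ s > 0, T s = s ^ (-α) * L s)
    (hL : ∀ l > 0, Tendsto (fun s => L (l * s) / L s) atTop (𝓝 1))
    {c : ℝ} (hG : Tendsto (fun s => G s / T s) atTop (𝓝 c))
    {a : ℕ → ℝ} (ha : ∀ n, 0 < a n) (hna : Tendsto (fun n : ℕ => n * T (a n)) atTop (𝓝 1))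
    {u : ℝ} (hu : 0 < u) :
    Tendsto (fun n : ℕ => n * G (u * a n)) atTop (𝓝 (c * u ^ (-α))) := by
  have hLne : ∀ᶠ s in atTop, L s ≠ 0 :=
    ((hL 2 two_pos).eventually_ne one_ne_zero).mono fun s hs h0 => hs (by simp [h0])
  have hTpos : ∀ t, 0 < T t := hT.pos_of_eventually_ne_zero hT0 <|
    (hLne.and (eventually_gt_atTop 0)).mono fun s ⟨hs, hs0⟩ => by
      rw [hreg s hs0]; exact mul_ne_zero (Real.rpow_pos_of_pos hs0 _).ne' hs
  have hatop : Tendsto a atTop atTop := hT.tendsto_atTop_of_tendsto_nat_mul hTpos hna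
  have hratio : ∀ n, T (u * a n) / T (a n) = u ^ (-α) * (L (u * a n) / L (a n)) := fun n => by
    have han := ha n
    have hLa : L (a n) ≠ 0 := fun h0 => (hTpos (a n)).ne' (by rw [hreg _ han, h0, mul_zero])
    rw [hreg _ (mul_pos hu han), hreg _ han, Real.mul_rpow hu.le han.le]
    field_simp [(Real.rpow_pos_of_pos han (-α)).ne']
  -- n G(u aₙ) = (G / T)(u aₙ) · (T(u aₙ) / T(aₙ)) · n T(aₙ)
  have hlim := ((hG.comp (hatop.const_mul_atTop hu)).mul
    (((hL u hu).comp hatop).const_mul (u ^ (-α)))).mul hna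
  rw [mul_one, mul_one] at hlim
  refine hlim.congr fun n => ?_
  simp only [Function.comp_apply, ← hratio]
  field_simp [(hTpos (u * a n)).ne', (hTpos (a n)).ne']

end RegularVariation

noncomputable def signedWeight (c d t : ℝ) : ℝ :=
  (if 0 < t then c else 0) + (if t < 0 then d else 0)

lemma measurable_signedWeight :
    Measurable fun q : (ℝ × ℝ) × ℝ => signedWeight q.1.1 q.1.2 q.2 :=
  (Measurable.ite (measurableSet_lt measurable_const measurable_snd) measurable_fst.fst
    measurable_const).add
    (Measurable.ite (measurableSet_lt measurable_snd measurable_const) measurable_fst.snd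
      measurable_const)

lemma compl_setOf_abs_div_mul_signedWeight_le {x a c d : ℝ} (hx : 0 < x) (ha : 0 < a)
    (hc : 0 ≤ c) (hd : 0 ≤ d) :
    {t | |t| / a * signedWeight c d t ≤ x}ᶜ = {t | x * a < c * t} ∪ {t | x * a < d * -t} := by
  ext t
  have hxa : 0 < x * a := mul_pos hx ha
  simp only [mem_compl_iff, mem_ofPred_eq, mem_union, not_le, div_mul_eq_mul_div,
    lt_div_iff₀ ha, signedWeight]
  rcases lt_trichotomy t 0 with ht | rfl | ht
  · simp only [if_neg ht.not_gt, if_pos ht, abs_of_neg ht, zero_add]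
    constructor
    · intro h; right; linarith
    · rintro (h | h) <;> nlinarith
  · simp only [abs_zero, zero_mul, mul_zero, neg_zero]
    constructor <;> intro h <;> simp_all [not_lt.2 hxa.le]
  · simp only [if_pos ht, if_neg ht.not_gt, abs_of_pos ht, add_zero]
    constructor
    · intro h; left; linarith
    · rintro (h | h) <;> nlinarith

section PointwiseLimit

variable {β : Type*} [MeasurableSpace β] {a : ℕ → ℝ} {α p x : ℝ}

lemma tendsto_nat_mul_measure_lt_const_mul (ν : Measure β) (φ : β → ℝ) (hα : 0 < α)
    (ha : ∀ n, 0 < a n)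
    (hν : ∀ u > 0, Tendsto (fun n : ℕ => n * (ν {y | u * a n < φ y}).toReal) atTop
      (𝓝 (p * u ^ (-α))))
    (hx : 0 < x) {c : ℝ} (hc : 0 ≤ c) :
    Tendsto (fun n : ℕ => n * (ν {y | x * a n < c * φ y}).toReal) atTop
      (𝓝 (p * c ^ α * x ^ (-α))) := by
  rcases hc.eq_or_lt with rfl | hc
  · simp [fun n => not_lt.2 (mul_pos hx (ha n)).le, Real.zero_rpow hα.ne']
  · have hset : ∀ n, {y | x * a n < c * φ y} = {y | x / c * a n < φ y} := fun n => by
      ext y; simp only [mem_ofPred_eq, div_mul_eq_mul_div, div_lt_iff₀' hc]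
    have hpow : (x / c) ^ (-α) = c ^ α * x ^ (-α) := by
      rw [Real.div_rpow hx.le hc.le, Real.rpow_neg hc.le, div_inv_eq_mul, mul_comm]
    simpa only [hset, hpow, mul_assoc] using hν (x / c) (div_pos hx hc)

lemma tendsto_measure_abs_div_mul_signedWeight_le_pow {Ω : Type*} [MeasurableSpace Ω]
    {P : Measure Ω} [IsProbabilityMeasure P] {Y : Ω → ℝ} (hY : Measurable Y) {r : ℝ}
    (hα : 0 < α) (ha : ∀ n, 0 < a n)
    (hp : ∀ u > 0, Tendsto (fun n : ℕ => n * (P {ω | u * a n < Y ω}).toReal) atTop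
      (𝓝 (p * u ^ (-α))))
    (hr : ∀ u > 0, Tendsto (fun n : ℕ => n * (P {ω | Y ω < -(u * a n)}).toReal) atTop
      (𝓝 (r * u ^ (-α))))
    (hx : 0 < x) {c d : ℝ} (hc : 0 ≤ c) (hd : 0 ≤ d) :
    Tendsto (fun n : ℕ => (P {ω | |Y ω| / a n * signedWeight c d (Y ω) ≤ x}).toReal ^ n) atTop
      (𝓝 (Real.exp (-(x ^ (-α)) * (p * c ^ α + r * d ^ α)))) := by
  set A : ℕ → Set Ω := fun n => {ω | x * a n < c * Y ω}
  set B : ℕ → Set Ω := fun n => {ω | x * a n < d * -Y ω}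
  have hB : ∀ n, MeasurableSet (B n) := fun n => measurableSet_lt measurable_const (by fun_prop)
  have hAB : ∀ n, MeasurableSet (A n ∪ B n) :=
    fun n => (measurableSet_lt measurable_const (by fun_prop)).union (hB n)
  have hdisj : ∀ n, Disjoint (A n) (B n) := fun n => disjoint_left.2 fun ω h₁ h₂ => by
    have := mul_pos hx (ha n)
    simp only [A, B, mem_ofPred_eq] at h₁ h₂
    nlinarith [mul_pos (this.trans h₁) (this.trans h₂),
      mul_nonneg (mul_nonneg hc hd) (sq_nonneg (Y ω))]
  have hevent :
      ∀ n, {ω | |Y ω| / a n * signedWeight c d (Y ω) ≤ x} = (A n ∪ B n)ᶜ := fun n => by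
    rw [← compl_compl {ω | _}]
    exact congrArg (fun s => (Y ⁻¹' s)ᶜ)
      (compl_setOf_abs_div_mul_signedWeight_le hx (ha n) hc hd)
  have hr' : ∀ u > 0, Tendsto (fun n : ℕ => n * (P {ω | u * a n < -Y ω}).toReal) atTop
      (𝓝 (r * u ^ (-α))) := fun u hu => by
    simpa only [lt_neg] using hr u hu
  have hsum := (tendsto_nat_mul_measure_lt_const_mul P Y hα ha hp hx hc).add
    (tendsto_nat_mul_measure_lt_const_mul P (fun ω => -Y ω) hα ha hr' hx hd)
  have hlim := Real.tendsto_one_add_pow_exp_of_tendsto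
    (g := fun n => -((P (A n)).toReal + (P (B n)).toReal)) (hsum.neg.congr fun n => by ring)
  rw [show -(p * c ^ α * x ^ (-α) + r * d ^ α * x ^ (-α))
    = -(x ^ (-α)) * (p * c ^ α + r * d ^ α) by ring] at hlim
  refine hlim.congr fun n => ?_
  rw [hevent, prob_compl_eq_one_sub (hAB n),
    ENNReal.toReal_sub_of_le prob_le_one ENNReal.one_ne_top, measure_union (hdisj n) (hB n),
    ENNReal.toReal_add (measure_ne_top _ _) (measure_ne_top _ _), ENNReal.toReal_one]
  ring

end PointwiseLimit

section Conditioning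

variable {Ω : Type*} [MeasurableSpace Ω] {P : Measure Ω}

lemma indepFun_pi_of_indep_iSup_comap {ι κ β γ : Type*} [mβ : MeasurableSpace β]
    [mγ : MeasurableSpace γ] {X : ι → Ω → β} {Y : κ → Ω → γ}
    (h : Indep (⨆ i, mβ.comap (X i)) (⨆ k, mγ.comap (Y k)) P) :
    IndepFun (fun ω i => X i ω) (fun ω k => Y k ω) P :=
  indep_of_indep_of_le_left
    (indep_of_indep_of_le_right h (@measurable_pi_lambda _ _ _ (⨆ k, mγ.comap (Y k)) _ _
      fun k => Measurable.of_comap_le (le_iSup (fun k => mγ.comap (Y k)) k)).comap_le)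
    (@measurable_pi_lambda _ _ _ (⨆ i, mβ.comap (X i)) _ _
      fun i => Measurable.of_comap_le (le_iSup (fun i => mβ.comap (X i)) i)).comap_le

lemma measure_forall_mem_eq_lintegral_pow [IsFiniteMeasure P] {ι β γ : Type*}
    [MeasurableSpace β] [MeasurableSpace γ] {Z : ι → Ω → β} {W : Ω → γ} {i₀ : ι}
    (hZ : ∀ i, Measurable (Z i)) (hW : Measurable W) (hindep : iIndepFun Z P)
    (hident : ∀ i, IdentDistrib (Z i) (Z i₀) P P) (hWZ : IndepFun W (fun ω i => Z i ω) P)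
    (s : Finset ι) {S : Set (γ × β)} (hS : MeasurableSet S) :
    P {ω | ∀ i ∈ s, (W ω, Z i ω) ∈ S} =
      ∫⁻ ω, P.map (Z i₀) (Prod.mk (W ω) ⁻¹' S) ^ s.card ∂P := by
  have hV : Measurable fun ω i => Z i ω := measurable_pi_lambda _ hZ
  have hB : MeasurableSet {q : γ × (ι → β) | ∀ i ∈ s, (q.1, q.2 i) ∈ S} := by
    simp only [ofPred_forall]
    exact Finset.measurableSet_biInter s fun i _ =>
      measurable_fst.prodMk ((measurable_pi_apply i).comp measurable_snd) hS
  have hslice : ∀ w, P.map (fun ω i => Z i ω)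
      (Prod.mk w ⁻¹' {q : γ × (ι → β) | ∀ i ∈ s, (q.1, q.2 i) ∈ S})
        = P.map (Z i₀) (Prod.mk w ⁻¹' S) ^ s.card := fun w => by
    have hSw : MeasurableSet (Prod.mk w ⁻¹' S) := measurable_prodMk_left hS
    rw [Measure.map_apply hV (measurable_prodMk_left hB)]
    have : (fun ω i => Z i ω) ⁻¹' (Prod.mk w ⁻¹' {q : γ × (ι → β) | ∀ i ∈ s, (q.1, q.2 i) ∈ S})
        = ⋂ i ∈ s, Z i ⁻¹' (Prod.mk w ⁻¹' S) := by
      ext ω; simp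
    rw [this, hindep.measure_inter_preimage_eq_mul s (fun _ _ => hSw),
      Finset.prod_congr rfl fun i _ => ((hident i).measure_mem_eq hSw), Finset.prod_const,
      Measure.map_apply (hZ i₀) hSw]
  calc P {ω | ∀ i ∈ s, (W ω, Z i ω) ∈ S}
      = P.map (fun ω => (W ω, fun i => Z i ω)) {q | ∀ i ∈ s, (q.1, q.2 i) ∈ S} :=
        (Measure.map_apply (hW.prodMk hV) hB).symm
    _ = ∫⁻ w, P.map (Z i₀) (Prod.mk w ⁻¹' S) ^ s.card ∂(P.map W) := by
        rw [(indepFun_iff_map_prod_eq_prod_map_map hW.aemeasurable hV.aemeasurable).1 hWZ,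
          Measure.prod_apply hB]
        exact lintegral_congr fun w => hslice w
    _ = ∫⁻ ω, P.map (Z i₀) (Prod.mk (W ω) ⁻¹' S) ^ s.card ∂P :=
        lintegral_map ((measurable_measure_prodMk_left hS).pow_const _) hW

lemma tendsto_toReal_lintegral_of_le_one [IsFiniteMeasure P] {f : ℕ → Ω → ℝ≥0∞} {g : Ω → ℝ}
    (hf : ∀ n, Measurable (f n)) (hf1 : ∀ n ω, f n ω ≤ 1)
    (hfg : ∀ᵐ ω ∂P, Tendsto (fun n => (f n ω).toReal) atTop (𝓝 (g ω))) :
    Tendsto (fun n => (∫⁻ ω, f n ω ∂P).toReal) atTop (𝓝 (∫ ω, g ω ∂P)) := by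
  have hfin : ∀ n, ∀ᵐ ω ∂P, f n ω < ∞ :=
    fun n => ae_of_all _ fun ω => (hf1 n ω).trans_lt ENNReal.one_lt_top
  simp_rw [← integral_toReal (hf _).aemeasurable (hfin _)]
  refine tendsto_integral_of_dominated_convergence (fun _ => 1)
    (fun n => (hf n).ennreal_toReal.aestronglyMeasurable) (integrable_const 1) (fun n => ?_) hfg
  exact ae_of_all _ fun ω => by
    simpa using ENNReal.toReal_mono ENNReal.one_ne_top (hf1 n ω)

end Conditioning

theorem stmt10_general
    {Ω : Type*} [MeasurableSpace Ω] (P : Measure Ω) [IsProbabilityMeasure P]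
    (Z : ℤ → Ω → ℝ) (hZmeas : ∀ i, Measurable (Z i))
    (hZindep : iIndepFun Z P)
    (hZident : ∀ i, IdentDistrib (Z i) (Z 1) P P)
    (α : ℝ) (hα : 0 < α) (L : ℝ → ℝ)
    (hreg : ∀ x > (0 : ℝ), (P {ω | x < |Z 1 ω|}).toReal = x ^ (-α) * L x)
    (hL : ∀ l > (0 : ℝ), Tendsto (fun x => L (l * x) / L x) atTop (nhds 1))
    (p r : ℝ)
    (hptail : Tendsto (fun x : ℝ =>
      (P {ω | x < Z 1 ω}).toReal / (P {ω | x < |Z 1 ω|}).toReal) atTop (nhds p))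
    (hrtail : Tendsto (fun x : ℝ =>
      (P {ω | Z 1 ω < -x}).toReal / (P {ω | x < |Z 1 ω|}).toReal) atTop (nhds r))
    (a : ℕ → ℝ) (ha : ∀ n, 0 < a n)
    (hna : Tendsto (fun n : ℕ => (n : ℝ) * (P {ω | a n < |Z 1 ω|}).toReal) atTop (nhds 1))
    (C : ℕ → Ω → ℝ) (hCmeas : ∀ j, Measurable (C j))
    (hCZindep : Indep (⨆ j, MeasurableSpace.comap (C j) Real.measurableSpace)
      (⨆ i, MeasurableSpace.comap (Z i) Real.measurableSpace) P)
    (Cp Cm : Ω → ℝ)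
    (hCp : Cp = fun ω => ⨆ j : ℕ, max (C j ω) 0)
    (hCm : Cm = fun ω => ⨆ j : ℕ, max (-(C j ω)) 0) :
    ∀ x > (0 : ℝ),
      Tendsto
        (fun n : ℕ =>
          (P {ω | ∀ i ∈ Finset.Icc (1 : ℤ) (n : ℤ),
            (|Z i ω| / a n) *
              ((if 0 < Z i ω then Cp ω else 0) + (if Z i ω < 0 then Cm ω else 0)) ≤ x}).toReal)
        atTop
        (nhds (∫ ω, Real.exp (-(x ^ (-α)) * (p * Cp ω ^ α + r * Cm ω ^ α)) ∂P)) := by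
  intro x hx
  subst hCp hCm
  have hT : Antitone fun t => (P {ω | t < |Z 1 ω|}).toReal := fun s t hst =>
    ENNReal.toReal_mono (measure_ne_top _ _) (measure_mono fun ω hω => hst.trans_lt hω)
  have hT0 : ∀ t, 0 ≤ (P {ω | t < |Z 1 ω|}).toReal := fun _ => ENNReal.toReal_nonneg
  set F : (ℕ → ℝ) → ℝ × ℝ := fun c => (⨆ j, max (c j) 0, ⨆ j, max (-c j) 0)
  have hF : Measurable F := by fun_prop
  have hW : Measurable (F ∘ fun ω j => C j ω) := hF.comp (measurable_pi_lambda _ hCmeas)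
  have hWZ := (indepFun_pi_of_indep_iSup_comap hCZindep).comp hF measurable_id
  have hS : ∀ n : ℕ,
      MeasurableSet {q : (ℝ × ℝ) × ℝ | |q.2| / a n * signedWeight q.1.1 q.1.2 q.2 ≤ x} :=
    fun n => measurableSet_le ((measurable_snd.abs.div_const _).mul measurable_signedWeight)
      measurable_const
  have hcond := fun n : ℕ => measure_forall_mem_eq_lintegral_pow hZmeas hW hZindep hZident hWZ
    (Finset.Icc 1 (n : ℤ)) (hS n)
  simp only [Int.card_Icc, add_sub_cancel_right, Int.toNat_natCast] at hcond
  refine (tendsto_toReal_lintegral_of_le_one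
    (fun n => ((measurable_measure_prodMk_left (hS n)).comp hW).pow_const n)
    (fun n ω => pow_le_one₀ bot_le prob_le_one) (ae_of_all _ fun ω => ?_)).congr
    fun n => congrArg ENNReal.toReal (hcond n).symm
  refine (tendsto_measure_abs_div_mul_signedWeight_le_pow (hZmeas 1) hα ha
    (fun u hu => tendsto_nat_mul_comp_const_mul hT hT0 hreg hL hptail ha hna hu)
    (fun u hu => tendsto_nat_mul_comp_const_mul hT hT0 hreg hL hrtail ha hna hu) hx
    (Real.iSup_nonneg fun _ => le_max_right _ _)
    (Real.iSup_nonneg fun _ => le_max_right _ _)).congr fun n => ?_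
  rw [Function.comp_apply, Measure.map_apply (hZmeas 1) (measurable_prodMk_left (hS n)),
    ENNReal.toReal_pow]
  rfl

/-- With (C_j) independent of (Z_i) and C_+ = sup_j (C_j ∨ 0),
C_- = sup_j ((-C_j) ∨ 0) a.s. finite, for every x > 0,
P( max_{1≤i≤n} (|Z_i|/a_n)·(C_+·1_{Z_i>0} + C_-·1_{Z_i<0}) ≤ x )
  → E[ exp( -x^{-α}·( p·C_+^α + r·C_-^α ) ) ]. -/
theorem stmt10
    {Ω : Type*} [MeasurableSpace Ω] (P : Measure Ω) [IsProbabilityMeasure P]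
    (Z : ℤ → Ω → ℝ) (hZmeas : ∀ i, Measurable (Z i))
    (hZindep : iIndepFun Z P)
    (hZident : ∀ i, IdentDistrib (Z i) (Z 1) P P)
    (α : ℝ) (hα : 0 < α) (L : ℝ → ℝ)
    (hreg : ∀ x > (0 : ℝ), (P {ω | x < |Z 1 ω|}).toReal = x ^ (-α) * L x)
    (hL : ∀ l > (0 : ℝ), Tendsto (fun x => L (l * x) / L x) atTop (nhds 1))
    (p r : ℝ) (hp : p ∈ Set.Icc (0 : ℝ) 1) (hr : r ∈ Set.Icc (0 : ℝ) 1) (hpr : p + r = 1)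
    (hptail : Tendsto (fun x : ℝ =>
      (P {ω | x < Z 1 ω}).toReal / (P {ω | x < |Z 1 ω|}).toReal) atTop (nhds p))
    (hrtail : Tendsto (fun x : ℝ =>
      (P {ω | Z 1 ω < -x}).toReal / (P {ω | x < |Z 1 ω|}).toReal) atTop (nhds r))
    (a : ℕ → ℝ) (ha : ∀ n, 0 < a n)
    (hna : Tendsto (fun n : ℕ => (n : ℝ) * (P {ω | a n < |Z 1 ω|}).toReal) atTop (nhds 1))
    (C : ℕ → Ω → ℝ) (hCmeas : ∀ j, Measurable (C j))
    (hCZindep : Indep (⨆ j, MeasurableSpace.comap (C j) Real.measurableSpace)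
      (⨆ i, MeasurableSpace.comap (Z i) Real.measurableSpace) P)
    (Cp Cm : Ω → ℝ)
    (hCp : Cp = fun ω => ⨆ j : ℕ, max (C j ω) 0)
    (hCm : Cm = fun ω => ⨆ j : ℕ, max (-(C j ω)) 0)
    (hCpfin : ∀ᵐ ω ∂P, BddAbove (Set.range fun j : ℕ => max (C j ω) 0))
    (hCmfin : ∀ᵐ ω ∂P, BddAbove (Set.range fun j : ℕ => max (-(C j ω)) 0)) :
    ∀ x > (0 : ℝ),
      Tendsto
        (fun n : ℕ =>
          (P {ω | ∀ i ∈ Finset.Icc (1 : ℤ) (n : ℤ),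
            (|Z i ω| / a n) *
              ((if 0 < Z i ω then Cp ω else 0) + (if Z i ω < 0 then Cm ω else 0)) ≤ x}).toReal)
        atTop
        (nhds (∫ ω, Real.exp (-(x ^ (-α)) * (p * Cp ω ^ α + r * Cm ω ^ α)) ∂P)) :=
  stmt10_general P Z hZmeas hZindep hZident α hα L hreg hL p r hptail hrtail a ha hna C hCmeas
    hCZindep Cp Cm hCp hCm
end

section
/- Fix integers n ≥ 1 and q ≥ 2. Let (c_j)_{j≥0} be real numbers with Σ_{j≥0} |c_j| < ∞ and let (z_i)_{i∈ℤ} be real numbers such that Σ_{j≥0} |c_j|·|z_{i−j}| < ∞ for every 1 ≤ i ≤ n. Set c^{max} = sup_{j≥q−1} c_j, c^{min} = inf_{j≥q−1} c_j, x_i = Σ_{j≥0} c_j·z_{i−j}, and x_i^q = Σ_{j=0}^{q−2} c_j·z_{i−j} + c^{max}·z_{i−q+1} + c^{min}·z_{i−q}. Then Σ_{i=1}^n |x_i − x_i^q| ≤ 5·(Σ_{j≥q−1}|c_j|)·Σ_{i=1}^{n+1}|z_{i−q}| + Σ_{i=−∞}^0 |z_{i−q}|·Σ_{j=1}^n |c_{q−i+j}|,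 where the right-hand side is interpreted as a value in [0,∞]. -/
/-!
Write `q = r + 1` and `S = ∑_{j ≥ r} |c_j|`. Since `c^{max}` and `c^{min}` are bounded in absolute
value by `S`, each error `x_i - x_i^q` is at most the tail `∑_{m ≥ 0} |c_{r+m}| |z_{i-r-m}|` plus
`S (|z_{i-r}| + |z_{i-r-1}|)`. Summing over `i`, the last two terms contribute at most `2 S Z` with
`Z = ∑_{k=0}^{n} |z_{k-r}|`. In the tails, the terms with `i - m ≥ 0` form a truncated Cauchy
product of `(|c_{r+m}|)_m` and `(|z_{k-r}|)_k`, bounded by `S Z`; the terms with `i - m < 0` only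
involve `z` at indices `≤ -q` and, regrouped by that index, give the last series of the bound.
This even yields the constant `3` in place of `5`.
The tails are summed in `ℝ≥0∞`, where double series can be rearranged without summability
bookkeeping.
-/

open Finset ENNReal

theorem abs_ciSup_le_tsum_abs {ι : Type*} [Nonempty ι] {a : ι → ℝ}
    (ha : Summable fun j => |a j|) : |⨆ j, a j| ≤ ∑' j, |a j| := by
  have hle (j : ι) : |a j| ≤ ∑' j, |a j| := ha.le_tsum j fun _ _ => abs_nonneg _
  have hbdd : BddAbove (Set.range a) :=
    ⟨_, Set.forall_mem_range.2 fun j => (le_abs_self _).trans (hle j)⟩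
  obtain ⟨j⟩ := ‹Nonempty ι›
  exact abs_le.2 ⟨(neg_le_of_abs_le (hle j)).trans (le_ciSup hbdd j),
    ciSup_le fun j => (le_abs_self _).trans (hle j)⟩

theorem abs_ciInf_le_tsum_abs {ι : Type*} [Nonempty ι] {a : ι → ℝ}
    (ha : Summable fun j => |a j|) : |⨅ j, a j| ≤ ∑' j, |a j| := by
  have hle (j : ι) : |a j| ≤ ∑' j, |a j| := ha.le_tsum j fun _ _ => abs_nonneg _
  have hbdd : BddBelow (Set.range a) :=
    ⟨_, Set.forall_mem_range.2 fun j => neg_le_of_abs_le (hle j)⟩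
  obtain ⟨j⟩ := ‹Nonempty ι›
  exact abs_le.2 ⟨le_ciInf fun j => neg_le_of_abs_le (hle j),
    (ciInf_le hbdd j).trans ((le_abs_self _).trans (hle j))⟩

theorem abs_tsum_sub_sum_range_add_le {u : ℕ → ℝ} (hu : Summable fun j => |u j|) (r : ℕ) (a v b w : ℝ) :
    |∑' j, u j - (∑ j ∈ range r, u j + a * v + b * w)| ≤
      ∑' m, |u (r + m)| + |a| * |v| + |b| * |w| := by
  have htail : Summable fun m => |u (r + m)| := by
    simpa only [add_comm r] using (summable_nat_add_iff r).2 hu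
  rw [← hu.of_abs.sum_add_tsum_nat_add r, add_assoc (∑ j ∈ range r, u j), add_sub_add_left_eq_sub,
    ← abs_mul, ← abs_mul]
  simp only [add_comm _ r]
  have habs : |∑' m, u (r + m)| ≤ ∑' m, |u (r + m)| := by
    simp only [← Real.norm_eq_abs] at htail ⊢
    exact norm_tsum_le_tsum_norm htail
  calc |∑' m, u (r + m) - (a * v + b * w)|
      ≤ |∑' m, u (r + m)| + |a * v + b * w| := abs_sub _ _
    _ ≤ ∑' m, |u (r + m)| + (|a * v| + |b * w|) := add_le_add habs (abs_add_le _ _)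
    _ = ∑' m, |u (r + m)| + |a * v| + |b * w| := (add_assoc _ _ _).symm

theorem sum_range_sum_range_mul_le (f : ℕ → ℝ≥0∞) (g : ℤ → ℝ≥0∞) (n : ℕ) :
    ∑ i ∈ range (n + 1), ∑ m ∈ range (i + 1), f m * g (i - m) ≤
      (∑ m ∈ range (n + 1), f m) * ∑ k ∈ range (n + 1), g k := by
  simp only [range_eq_Ico]
  rw [← sum_Ico_Ico_comm, sum_mul]
  gcongr with m hm
  rw [← mul_sum, sum_Ico_eq_sum_range]
  gcongr
  simp only [Nat.cast_add, add_sub_cancel_left, ← range_eq_Ico]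
  exact sum_le_sum_of_subset (range_subset_range.2 (Nat.sub_le _ _))

theorem sum_Icc_tsum_mul_le (f : ℕ → ℝ≥0∞) (g : ℤ → ℝ≥0∞) (n : ℕ) :
    ∑ i ∈ Icc 1 n, ∑' m, f m * g (i - m) ≤
      (∑' m, f m) * ∑ k ∈ range (n + 1), g k +
        ∑' m : ℕ, g (-m - 1) * ∑ j ∈ Icc 1 n, f (m + 1 + j) := by
  have hsplit (i : ℕ) : ∑' m, f m * g (i - m) =
      ∑ m ∈ range (i + 1), f m * g (i - m) + ∑' m : ℕ, g (-m - 1) * f (m + 1 + i) := by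
    rw [← ENNReal.summable.sum_add_tsum_nat_add' (k := i + 1)]
    congr 1
    refine tsum_congr fun m => ?_
    rw [mul_comm, show (i : ℤ) - ((m + (i + 1) : ℕ) : ℤ) = -m - 1 by push_cast; ring,
      show m + (i + 1) = m + 1 + i by omega]
  simp only [hsplit, sum_add_distrib]
  gcongr ?_ + ?_
  · calc ∑ i ∈ Icc 1 n, ∑ m ∈ range (i + 1), f m * g (i - m)
        ≤ ∑ i ∈ range (n + 1), ∑ m ∈ range (i + 1), f m * g (i - m) :=
          sum_le_sum_of_subset fun i hi => by simp only [mem_Icc, mem_range] at hi ⊢; omega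
      _ ≤ (∑ m ∈ range (n + 1), f m) * ∑ k ∈ range (n + 1), g k :=
          sum_range_sum_range_mul_le f g n
      _ ≤ (∑' m, f m) * ∑ k ∈ range (n + 1), g k := by gcongr; exact ENNReal.sum_le_tsum _
  · rw [← Summable.tsum_finsetSum fun _ _ => ENNReal.summable]
    simp only [mul_sum, le_refl]

theorem sum_Icc_one_intCast {M : Type*} [AddCommMonoid M] (m : ℕ) (F : ℤ → M) :
    ∑ i ∈ Icc (1 : ℤ) m, F i = ∑ i ∈ Icc 1 m, F i := by
  have hmap : Icc (1 : ℤ) m = (Icc 1 m).map Nat.castEmbedding := by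
    ext i
    simp only [mem_Icc, Finset.mem_map, Nat.castEmbedding_apply]
    constructor
    · intro hi
      exact ⟨i.toNat, by omega, by omega⟩
    · rintro ⟨k, hk, rfl⟩
      exact_mod_cast hk
  rw [hmap, sum_map]
  rfl

theorem sum_Icc_one_eq_sum_range {M : Type*} [AddCommMonoid M] (m : ℕ) (F : ℕ → M) :
    ∑ i ∈ Icc 1 m, F i = ∑ k ∈ range m, F (k + 1) := by
  rw [← Ico_add_one_right_eq_Icc, sum_Ico_eq_sum_range, Nat.add_sub_cancel]
  simp only [add_comm 1]

section LinearProcess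

variable {c : ℕ → ℝ} {z : ℤ → ℝ} {r n : ℕ}

theorem sum_abs_tsum_sub_truncation_le
    (hu : ∀ i ∈ Icc 1 n, Summable fun j : ℕ => |c j * z (i - j)|) {a b : ℝ}
    (ha : |a| ≤ ∑' j, |c (r + j)|) (hb : |b| ≤ ∑' j, |c (r + j)|) :
    ∑ i ∈ Icc 1 n, |∑' j, c j * z (i - j) -
        (∑ j ∈ range r, c j * z (i - j) + a * z (i - r) + b * z (i - r - 1))| ≤
      ∑ i ∈ Icc 1 n, ∑' m, |c (r + m) * z (i - ↑(r + m))| +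
        2 * ((∑' j, |c (r + j)|) * ∑ k ∈ range (n + 1), |z (k - r)|) := by
  set S := ∑' j, |c (r + j)|
  set Z := ∑ k ∈ range (n + 1), |z (k - r)|
  have hZ₁ : ∑ i ∈ Icc 1 n, |z (i - r)| ≤ Z :=
    sum_le_sum_of_subset_of_nonneg (fun i hi => by simp only [mem_Icc, mem_range] at hi ⊢; omega) fun _ _ _ => abs_nonneg _
  have hZ₂ : ∑ i ∈ Icc 1 n, |z (i - r - 1)| ≤ Z := by
    simp only [sum_Icc_one_eq_sum_range, Nat.cast_add, Nat.cast_one, sub_right_comm _ (r : ℤ) 1,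
      add_sub_cancel_right]
    exact sum_le_sum_of_subset_of_nonneg (range_subset_range.2 n.le_succ)
      fun _ _ _ => abs_nonneg _
  calc _ ≤ ∑ i ∈ Icc 1 n, (∑' m, |c (r + m) * z (i - ↑(r + m))| + S * |z (i - r)| +
          S * |z (i - r - 1)|) :=
        sum_le_sum fun i hi => (abs_tsum_sub_sum_range_add_le (hu i hi) r _ _ _ _).trans (by gcongr)
    _ = ∑ i ∈ Icc 1 n, ∑' m, |c (r + m) * z (i - ↑(r + m))| +
          S * ∑ i ∈ Icc 1 n, |z (i - r)| + S * ∑ i ∈ Icc 1 n, |z (i - r - 1)| := by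
        rw [sum_add_distrib, sum_add_distrib, mul_sum, mul_sum]
    _ ≤ ∑ i ∈ Icc 1 n, ∑' m, |c (r + m) * z (i - ↑(r + m))| + S * Z + S * Z := by gcongr
    _ = _ := by ring

theorem ofReal_sum_tsum_abs_mul_le (hc : Summable fun j => |c (r + j)|)
    (hu : ∀ i ∈ Icc 1 n, Summable fun j : ℕ => |c j * z (i - j)|) :
    ENNReal.ofReal (∑ i ∈ Icc 1 n, ∑' m, |c (r + m) * z (i - ↑(r + m))|) ≤
      ENNReal.ofReal ((∑' j, |c (r + j)|) * ∑ k ∈ range (n + 1), |z (k - r)|) +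
        ∑' m : ℕ, ENNReal.ofReal (|z (-m - r - 1)| * ∑ j ∈ Icc 1 n, |c (r + 1 + m + j)|) := by
  have hterm (i : ℕ) (hi : i ∈ Icc 1 n) :
      ENNReal.ofReal (∑' m, |c (r + m) * z (i - ↑(r + m))|) =
        ∑' m, ENNReal.ofReal |c (r + m)| * ENNReal.ofReal |z (i - m - r)| := by
    rw [ENNReal.ofReal_tsum_of_nonneg (fun _ => abs_nonneg _)
      (((summable_nat_add_iff r).2 (hu i hi)).congr fun m => by rw [add_comm])]
    refine tsum_congr fun m => ?_
    rw [abs_mul, ENNReal.ofReal_mul (abs_nonneg _), Nat.cast_add, sub_add_eq_sub_sub,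
      sub_right_comm]
  rw [ENNReal.ofReal_sum_of_nonneg fun _ _ => tsum_nonneg fun _ => abs_nonneg _,
    sum_congr rfl hterm]
  refine (sum_Icc_tsum_mul_le _ (fun k => ENNReal.ofReal |z (k - r)|) n).trans_eq ?_
  congr 1
  · rw [ENNReal.ofReal_mul (tsum_nonneg fun _ => abs_nonneg _),
      ENNReal.ofReal_tsum_of_nonneg (fun _ => abs_nonneg _) hc,
      ENNReal.ofReal_sum_of_nonneg fun _ _ => abs_nonneg _]
  · refine tsum_congr fun m => ?_
    rw [ENNReal.ofReal_mul (abs_nonneg _), ENNReal.ofReal_sum_of_nonneg fun _ _ => abs_nonneg _,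
      sub_right_comm _ (1 : ℤ)]
    congr 1
    refine sum_congr rfl fun j _ => ?_
    rw [show r + (m + 1 + j) = r + 1 + m + j by omega]

theorem ofReal_sum_abs_tsum_sub_truncation_le (hc : Summable fun j => |c (r + j)|)
    (hu : ∀ i ∈ Icc 1 n, Summable fun j : ℕ => |c j * z (i - j)|) {a b : ℝ}
    (ha : |a| ≤ ∑' j, |c (r + j)|) (hb : |b| ≤ ∑' j, |c (r + j)|) :
    ENNReal.ofReal (∑ i ∈ Icc 1 n, |∑' j, c j * z (i - j) -
        (∑ j ∈ range r, c j * z (i - j) + a * z (i - r) + b * z (i - r - 1))|) ≤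
      ENNReal.ofReal (3 * ((∑' j, |c (r + j)|) * ∑ k ∈ range (n + 1), |z (k - r)|)) +
        ∑' m : ℕ, ENNReal.ofReal (|z (-m - r - 1)| * ∑ j ∈ Icc 1 n, |c (r + 1 + m + j)|) := by
  calc _ ≤ _ := (ENNReal.ofReal_le_ofReal (sum_abs_tsum_sub_truncation_le hu ha hb)).trans
          ENNReal.ofReal_add_le
    _ ≤ _ := add_le_add_left (ofReal_sum_tsum_abs_mul_le hc hu) _
    _ = _ := by
        rw [add_right_comm, ← ENNReal.ofReal_add (by positivity) (by positivity)]
        congr 2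
        ring

end LinearProcess

theorem stmt14_general
    (n q : ℕ) (hq : 2 ≤ q)
    (c : ℕ → ℝ) (z : ℤ → ℝ)
    (hc : Summable (fun j : ℕ => |c j|))
    (hz : ∀ i ∈ Finset.Icc (1 : ℤ) (n : ℤ), Summable (fun j : ℕ => |c j| * |z (i - j)|))
    (cmax cmin : ℝ)
    (hcmax : cmax = ⨆ j : ℕ, c (q - 1 + j))
    (hcmin : cmin = ⨅ j : ℕ, c (q - 1 + j))
    (x xq : ℤ → ℝ)
    (hx : ∀ i : ℤ, x i = ∑' j : ℕ, c j * z (i - j))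
    (hxq : ∀ i : ℤ, xq i = (∑ j ∈ Finset.range (q - 1), c j * z (i - j)) +
      cmax * z (i - q + 1) + cmin * z (i - q)) :
    ENNReal.ofReal (∑ i ∈ Finset.Icc (1 : ℤ) (n : ℤ), |x i - xq i|) ≤
      ENNReal.ofReal (5 * (∑' j : ℕ, |c (q - 1 + j)|) *
          ∑ i ∈ Finset.Icc (1 : ℤ) ((n : ℤ) + 1), |z (i - q)|) +
        ∑' m : ℕ, ENNReal.ofReal (|z (-(m : ℤ) - q)| *
          ∑ j ∈ Finset.Icc 1 n, |c (q + m + j)|) := by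
  obtain ⟨r, rfl⟩ : ∃ r, q = r + 1 := ⟨q - 1, by omega⟩
  simp only [Nat.add_sub_cancel, Nat.cast_add, Nat.cast_one, sub_add_eq_sub_sub,
    sub_add_cancel] at hcmax hcmin hxq ⊢
  have hcS : Summable fun j => |c (r + j)| := by
    simpa only [add_comm r] using (summable_nat_add_iff r).2 hc
  have hu (i : ℕ) (hi : i ∈ Icc 1 n) : Summable fun j : ℕ => |c j * z (i - j)| := by
    simpa only [abs_mul] using hz i (by simpa using hi)
  have hZ : ∑ i ∈ Icc (1 : ℤ) (n + 1), |z (i - r - 1)| = ∑ k ∈ range (n + 1), |z (k - r)| := by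
    rw [show (n : ℤ) + 1 = ((n + 1 : ℕ) : ℤ) by push_cast; ring, sum_Icc_one_intCast,
      sum_Icc_one_eq_sum_range]
    simp only [Nat.cast_add, Nat.cast_one, sub_right_comm _ (r : ℤ) 1, add_sub_cancel_right]
  rw [hZ, sum_Icc_one_intCast]
  simp only [hx, hxq]
  refine (ofReal_sum_abs_tsum_sub_truncation_le hcS hu (hcmax ▸ abs_ciSup_le_tsum_abs hcS)
    (hcmin ▸ abs_ciInf_le_tsum_abs hcS)).trans ?_
  rw [mul_assoc 5]
  gcongr
  norm_num

/-- deterministic approximation estimate comparing the infinite-order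
linear sequence x_i = Σ_{j≥0} c_j·z_{i-j} with its truncation
x_i^q = Σ_{j=0}^{q-2} c_j·z_{i-j} + c^{max}·z_{i-q+1} + c^{min}·z_{i-q}:
Σ_{i=1}^n |x_i - x_i^q| ≤ 5·(Σ_{j≥q-1}|c_j|)·Σ_{i=1}^{n+1}|z_{i-q}|
  + Σ_{i=-∞}^0 |z_{i-q}|·Σ_{j=1}^n |c_{q-i+j}|, as values in [0,∞]. -/
theorem stmt14
    (n q : ℕ) (hn : 1 ≤ n) (hq : 2 ≤ q)
    (c : ℕ → ℝ) (z : ℤ → ℝ)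
    (hc : Summable (fun j : ℕ => |c j|))
    (hz : ∀ i ∈ Finset.Icc (1 : ℤ) (n : ℤ), Summable (fun j : ℕ => |c j| * |z (i - j)|))
    (cmax cmin : ℝ)
    (hcmax : cmax = ⨆ j : ℕ, c (q - 1 + j))
    (hcmin : cmin = ⨅ j : ℕ, c (q - 1 + j))
    (x xq : ℤ → ℝ)
    (hx : ∀ i : ℤ, x i = ∑' j : ℕ, c j * z (i - j))
    (hxq : ∀ i : ℤ, xq i = (∑ j ∈ Finset.range (q - 1), c j * z (i - j)) +
      cmax * z (i - q + 1) + cmin * z (i - q)) :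
    ENNReal.ofReal (∑ i ∈ Finset.Icc (1 : ℤ) (n : ℤ), |x i - xq i|) ≤
      ENNReal.ofReal (5 * (∑' j : ℕ, |c (q - 1 + j)|) *
          ∑ i ∈ Finset.Icc (1 : ℤ) ((n : ℤ) + 1), |z (i - q)|) +
        ∑' m : ℕ, ENNReal.ofReal (|z (-(m : ℤ) - q)| *
          ∑ j ∈ Finset.Icc 1 n, |c (q + m + j)|) :=
  stmt14_general n q hq c z hc hz cmax cmin hcmax hcmin x xq hx hxq
end

section
/- Let (Z_i)_{i∈ℤ} be an i.i.d. sequence of real random variables and let (B_j)_{j≥0} be nonnegative random variables, independent of (Z_i)_{i∈ℤ}, with Σ_{j≥0} E[B_j] < ∞. Fix n ∈ ℕ, a > 0, ε > 0 and φ > 1, and set Z_j^≤ = (Z_j/a)·1_{{|Z_j| ≤ a}} for j ∈ ℤ. Then P( max_{1≤i≤n} |Σ_{j≥0} B_j·Z_{i−j}^≤| > ε ) ≤ ( 1 + ε^{−φ}·n·E[(|Z_1|/a)^φ·1_{{|Z_1| ≤ a}}] ) · Σ_{j≥0} E[B_j]. -/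
/-!
On the event `∑ j, B j ≥ 1` Markov's inequality already gives probability at most `∑ j, E[B j]`.
Off that event the `B j ω` are sub-probability weights, so Jensen's inequality (in the form of the
weighted Hölder inequality) bounds `|∑ j, B j ω * Z^≤ (i - j) ω| ^ φ` by
`∑ j, B j ω * |Z^≤ (i - j) ω| ^ φ`. Markov at level `ε ^ φ`, the independence of the `B j` from the
`Z i` and the identical distribution of the `Z i` bound each of the `n` events by
`ε ^ (-φ) * E[|Z^≤ 1| ^ φ] * ∑ j, E[B j]`. Working in `ℝ≥0∞` with `‖·‖ₑ` makes every series
converge, so no summability has to be tracked.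
-/

open MeasureTheory ProbabilityTheory Filter
open scoped ENNReal

theorem ENNReal.inner_le_weight_mul_Lp_tsum {ι : Type*} {p : ℝ} (hp : 1 ≤ p) (w f : ι → ℝ≥0∞) :
    ∑' i, w i * f i ≤ (∑' i, w i) ^ (1 - p⁻¹) * (∑' i, w i * f i ^ p) ^ p⁻¹ := by
  have hp₀ : 0 ≤ p⁻¹ := inv_nonneg.2 (zero_le_one.trans hp)
  have hp₁ : 0 ≤ 1 - p⁻¹ := sub_nonneg.2 (inv_le_one_of_one_le₀ hp)
  rw [ENNReal.tsum_eq_iSup_sum]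
  refine iSup_le fun s => (ENNReal.inner_le_weight_mul_Lp_of_nonneg s hp w f).trans ?_
  gcongr <;> exact ENNReal.sum_le_tsum s

theorem ENNReal.rpow_tsum_mul_le_tsum_mul_rpow {ι : Type*} {p : ℝ} (hp : 1 ≤ p)
    {w : ι → ℝ≥0∞} (hw : ∑' i, w i ≤ 1) (f : ι → ℝ≥0∞) :
    (∑' i, w i * f i) ^ p ≤ ∑' i, w i * f i ^ p := by
  have hp₀ : 0 < p := zero_lt_one.trans_le hp
  calc (∑' i, w i * f i) ^ p
      ≤ ((∑' i, w i) ^ (1 - p⁻¹) * (∑' i, w i * f i ^ p) ^ p⁻¹) ^ p := by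
        gcongr; exact ENNReal.inner_le_weight_mul_Lp_tsum hp w f
    _ ≤ ((∑' i, w i * f i ^ p) ^ p⁻¹) ^ p := by
        gcongr
        exact mul_le_of_le_one_left'
          (ENNReal.rpow_le_one hw (sub_nonneg.2 (inv_le_one_of_one_le₀ hp)))
    _ = ∑' i, w i * f i ^ p := ENNReal.rpow_inv_rpow hp₀.ne' _

theorem ofReal_rpow_le_tsum_enorm_mul_rpow_of_lt_abs_tsum {ι : Type*} {ε p : ℝ} (hε : 0 ≤ ε)
    (hp : 1 ≤ p) {b y : ι → ℝ} (hb : ∑' i, ‖b i‖ₑ ≤ 1) (h : ε < |∑' i, b i * y i|) :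
    ENNReal.ofReal (ε ^ p) ≤ ∑' i, ‖b i‖ₑ * ‖y i‖ₑ ^ p := by
  have hp₀ : 0 ≤ p := zero_le_one.trans hp
  calc ENNReal.ofReal (ε ^ p)
      = ENNReal.ofReal ε ^ p := (ENNReal.ofReal_rpow_of_nonneg hε hp₀).symm
    _ ≤ ‖∑' i, b i * y i‖ₑ ^ p := by
        gcongr; rw [Real.enorm_eq_ofReal_abs]; exact ENNReal.ofReal_le_ofReal h.le
    _ ≤ (∑' i, ‖b i‖ₑ * ‖y i‖ₑ) ^ p := by
        gcongr; simp_rw [← enorm_mul]; exact enorm_tsum_le_tsum_enorm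
    _ ≤ ∑' i, ‖b i‖ₑ * ‖y i‖ₑ ^ p := ENNReal.rpow_tsum_mul_le_tsum_mul_rpow hp hb _

theorem lintegral_tsum_enorm_mul_comp_eq {Ω ι κ : Type*} [MeasurableSpace Ω] {P : Measure Ω}
    [Countable ι] {B : ι → Ω → ℝ} {Z : κ → Ω → ℝ} {X : Ω → ℝ}
    (hB : ∀ j, Measurable (B j)) (hZ : ∀ k, Measurable (Z k))
    (hBZ : Indep (⨆ j, MeasurableSpace.comap (B j) Real.measurableSpace)
      (⨆ k, MeasurableSpace.comap (Z k) Real.measurableSpace) P)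
    (hZX : ∀ k, IdentDistrib (Z k) X P P) {f : ℝ → ℝ≥0∞} (hf : Measurable f) (σ : ι → κ) :
    ∫⁻ ω, ∑' j, ‖B j ω‖ₑ * f (Z (σ j) ω) ∂P =
      (∑' j, ∫⁻ ω, ‖B j ω‖ₑ ∂P) * ∫⁻ ω, f (X ω) ∂P := by
  have hindep : ∀ j k, IndepFun (B j) (Z k) P := fun j k =>
    indep_of_indep_of_le_right
      (indep_of_indep_of_le_left hBZ (le_iSup (fun j => MeasurableSpace.comap (B j) _) j))
      (le_iSup (fun k => MeasurableSpace.comap (Z k) _) k)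
  rw [lintegral_tsum (f := fun j ω => ‖B j ω‖ₑ * f (Z (σ j) ω))
      fun j => ((hB j).enorm.mul (hf.comp (hZ (σ j)))).aemeasurable,
    ← ENNReal.tsum_mul_right]
  exact tsum_congr fun j =>
    (lintegral_mul_eq_lintegral_mul_lintegral_of_indepFun'' (hB j).enorm.aemeasurable
      (hf.comp (hZ (σ j))).aemeasurable ((hindep j (σ j)).comp measurable_enorm hf)).trans
      (congrArg _ ((hZX (σ j)).comp hf).lintegral_eq)

theorem lintegral_enorm_truncate_rpow {Ω : Type*} [MeasurableSpace Ω] {P : Measure Ω}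
    [IsFiniteMeasure P] {X : Ω → ℝ} (hX : Measurable X) {a p : ℝ} (ha : 0 < a) (hp : 0 < p) :
    ∫⁻ ω, ‖if |X ω| ≤ a then X ω / a else 0‖ₑ ^ p ∂P =
      ENNReal.ofReal (∫ ω in {ω | |X ω| ≤ a}, (|X ω| / a) ^ p ∂P) := by
  have hS : MeasurableSet {ω | |X ω| ≤ a} := measurableSet_le hX.abs measurable_const
  have hint : Integrable (fun ω => (|X ω| / a) ^ p) (P.restrict {ω | |X ω| ≤ a}) := by
    refine (integrable_const (1 : ℝ)).mono'
      ((hX.abs.div_const a).pow_const p).aestronglyMeasurable ((ae_restrict_iff' hS).2 ?_)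
    refine Eventually.of_forall fun ω hω => ?_
    rw [Real.norm_of_nonneg (by positivity)]
    exact Real.rpow_le_one (by positivity) ((div_le_one ha).2 hω) hp.le
  rw [ofReal_integral_eq_lintegral_ofReal hint (Eventually.of_forall fun ω => by positivity),
    ← lintegral_indicator hS]
  refine lintegral_congr fun ω => ?_
  by_cases hω : |X ω| ≤ a
  · simp [hω, Real.enorm_eq_ofReal_abs, abs_div, abs_of_pos ha,
      ENNReal.ofReal_rpow_of_nonneg (by positivity : 0 ≤ |X ω| / a) hp.le]
  · simp [hω, hp]

theorem tsum_lintegral_enorm_eq_ofReal {Ω ι : Type*} [MeasurableSpace Ω] {P : Measure Ω}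
    {B : ι → Ω → ℝ} (hB : ∀ j ω, 0 ≤ B j ω) (hBint : ∀ j, Integrable (B j) P)
    (hsum : Summable fun j => ∫ ω, B j ω ∂P) :
    ∑' j, ∫⁻ ω, ‖B j ω‖ₑ ∂P = ENNReal.ofReal (∑' j, ∫ ω, B j ω ∂P) := by
  rw [ENNReal.ofReal_tsum_of_nonneg (fun j => integral_nonneg (hB j)) hsum]
  refine tsum_congr fun j => ?_
  rw [lintegral_enorm_of_nonneg (hB j),
    ofReal_integral_eq_lintegral_ofReal (hBint j) (ae_of_all _ (hB j))]

theorem measure_exists_lt_abs_tsum_mul_le {Ω ι κ : Type*} [MeasurableSpace Ω] [Countable ι]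
    (P : Measure Ω) {B : ι → Ω → ℝ} {Y : κ → ι → Ω → ℝ} (hB : ∀ j, Measurable (B j))
    (hY : ∀ i j, Measurable (Y i j)) (s : Finset κ) {ε p : ℝ} (hε : 0 < ε) (hp : 1 ≤ p) :
    P {ω | ∃ i ∈ s, ε < |∑' j, B j ω * Y i j ω|} ≤
      ∫⁻ ω, ∑' j, ‖B j ω‖ₑ ∂P +
        ∑ i ∈ s, (∫⁻ ω, ∑' j, ‖B j ω‖ₑ * ‖Y i j ω‖ₑ ^ p ∂P) / ENNReal.ofReal (ε ^ p) := by
  set c := ENNReal.ofReal (ε ^ p)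
  have hsub : {ω | ∃ i ∈ s, ε < |∑' j, B j ω * Y i j ω|} ⊆
      {ω | 1 ≤ ∑' j, ‖B j ω‖ₑ} ∪ ⋃ i ∈ s, {ω | c ≤ ∑' j, ‖B j ω‖ₑ * ‖Y i j ω‖ₑ ^ p} := by
    rintro ω ⟨i, hi, hω⟩
    by_cases hBω : 1 ≤ ∑' j, ‖B j ω‖ₑ
    · exact Or.inl hBω
    · exact Or.inr (Set.mem_biUnion hi
        (ofReal_rpow_le_tsum_enorm_mul_rpow_of_lt_abs_tsum hε.le hp (not_le.1 hBω).le hω))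
  calc _ ≤ P {ω | 1 ≤ ∑' j, ‖B j ω‖ₑ} +
        P (⋃ i ∈ s, {ω | c ≤ ∑' j, ‖B j ω‖ₑ * ‖Y i j ω‖ₑ ^ p}) :=
        (measure_mono hsub).trans (measure_union_le _ _)
    _ ≤ (∫⁻ ω, ∑' j, ‖B j ω‖ₑ ∂P) / 1 +
        ∑ i ∈ s, (∫⁻ ω, ∑' j, ‖B j ω‖ₑ * ‖Y i j ω‖ₑ ^ p ∂P) / c := by
        gcongr
        · exact meas_ge_le_lintegral_div (AEMeasurable.tsum fun j => (hB j).enorm.aemeasurable)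
            one_ne_zero ENNReal.one_ne_top
        · refine (measure_biUnion_finset_le _ _).trans (Finset.sum_le_sum fun i _ => ?_)
          exact meas_ge_le_lintegral_div (AEMeasurable.tsum fun j =>
            ((hB j).enorm.mul ((hY i j).enorm.pow_const p)).aemeasurable) (by positivity)
            ENNReal.ofReal_ne_top
    _ = _ := by rw [div_one]

theorem stmt15_general
    {Ω : Type*} [MeasurableSpace Ω] (P : Measure Ω) [IsProbabilityMeasure P]
    (Z : ℤ → Ω → ℝ) (hZmeas : ∀ i, Measurable (Z i))
    (hZident : ∀ i, IdentDistrib (Z i) (Z 1) P P)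
    (B : ℕ → Ω → ℝ) (hBmeas : ∀ j, Measurable (B j)) (hBnonneg : ∀ j ω, 0 ≤ B j ω)
    (hBZindep : Indep (⨆ j : ℕ, MeasurableSpace.comap (B j) Real.measurableSpace)
      (⨆ i, MeasurableSpace.comap (Z i) Real.measurableSpace) P)
    (hBint : ∀ j, Integrable (B j) P)
    (hBsum : Summable (fun j : ℕ => ∫ ω, B j ω ∂P))
    (n : ℕ) (a ε φ : ℝ) (ha : 0 < a) (hε : 0 < ε) (hφ : 1 < φ) :
    (P {ω | ∃ i ∈ Finset.Icc (1 : ℤ) (n : ℤ),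
        ε < |∑' j : ℕ, B j ω *
          (if |Z (i - j) ω| ≤ a then Z (i - j) ω / a else 0)|}).toReal ≤
      (1 + ε ^ (-φ) * n * ∫ ω in {ω | |Z 1 ω| ≤ a}, (|Z 1 ω| / a) ^ φ ∂P) *
        ∑' j : ℕ, ∫ ω, B j ω ∂P := by
  have htrunc : Measurable fun z : ℝ => if |z| ≤ a then z / a else 0 :=
    (measurable_id.div_const a).ite (measurableSet_le measurable_abs measurable_const)
      measurable_const
  have hbound := measure_exists_lt_abs_tsum_mul_le P hBmeas
    (Y := fun (i : ℤ) (j : ℕ) ω => if |Z (i - j) ω| ≤ a then Z (i - j) ω / a else 0)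
    (fun i j => htrunc.comp (hZmeas _)) (Finset.Icc (1 : ℤ) n) hε hφ.le
  simp only [lintegral_tsum fun j => (hBmeas j).enorm.aemeasurable,
    lintegral_tsum_enorm_mul_comp_eq hBmeas hZmeas hBZindep hZident (htrunc.enorm.pow_const φ),
    tsum_lintegral_enorm_eq_ofReal hBnonneg hBint hBsum,
    lintegral_enorm_truncate_rpow (hZmeas 1) ha (zero_lt_one.trans hφ)] at hbound
  set S := ∑' j : ℕ, ∫ ω, B j ω ∂P
  set I := ∫ ω in {ω | |Z 1 ω| ≤ a}, (|Z 1 ω| / a) ^ φ ∂P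
  have hS : 0 ≤ S := tsum_nonneg fun j => integral_nonneg (hBnonneg j)
  have hI : 0 ≤ I := integral_nonneg fun ω => by positivity
  have hεφ : 0 < ε ^ φ := by positivity
  refine ENNReal.toReal_le_of_le_ofReal (by positivity) (hbound.trans_eq ?_)
  rw [Finset.sum_const, Int.card_Icc, add_sub_cancel_right, Int.toNat_natCast, nsmul_eq_mul,
    show (1 + ε ^ (-φ) * n * I) * S = S + n * (S * I / ε ^ φ) by rw [Real.rpow_neg hε.le]; ring,
    ENNReal.ofReal_add hS (by positivity), ENNReal.ofReal_mul (by positivity),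
    ENNReal.ofReal_natCast, ENNReal.ofReal_div_of_pos hεφ, ENNReal.ofReal_mul hS]

/-- For (Z_i) i.i.d., (B_j) nonnegative, independent of (Z_i), with
Σ_j E[B_j] < ∞, a > 0, ε > 0, φ > 1 and Z_j^≤ = (Z_j/a)·1_{|Z_j| ≤ a}:
P( max_{1≤i≤n} |Σ_j B_j·Z_{i-j}^≤| > ε )
  ≤ (1 + ε^{-φ}·n·E[(|Z_1|/a)^φ·1_{|Z_1| ≤ a}])·Σ_j E[B_j]. -/
theorem stmt15
    {Ω : Type*} [MeasurableSpace Ω] (P : Measure Ω) [IsProbabilityMeasure P]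
    (Z : ℤ → Ω → ℝ) (hZmeas : ∀ i, Measurable (Z i))
    (hZindep : iIndepFun Z P)
    (hZident : ∀ i, IdentDistrib (Z i) (Z 1) P P)
    (B : ℕ → Ω → ℝ) (hBmeas : ∀ j, Measurable (B j)) (hBnonneg : ∀ j ω, 0 ≤ B j ω)
    (hBZindep : Indep (⨆ j : ℕ, MeasurableSpace.comap (B j) Real.measurableSpace)
      (⨆ i, MeasurableSpace.comap (Z i) Real.measurableSpace) P)
    (hBint : ∀ j, Integrable (B j) P)
    (hBsum : Summable (fun j : ℕ => ∫ ω, B j ω ∂P))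
    (n : ℕ) (a ε φ : ℝ) (ha : 0 < a) (hε : 0 < ε) (hφ : 1 < φ) :
    (P {ω | ∃ i ∈ Finset.Icc (1 : ℤ) (n : ℤ),
        ε < |∑' j : ℕ, B j ω *
          (if |Z (i - j) ω| ≤ a then Z (i - j) ω / a else 0)|}).toReal ≤
      (1 + ε ^ (-φ) * n * ∫ ω in {ω | |Z 1 ω| ≤ a}, (|Z 1 ω| / a) ^ φ ∂P) *
        ∑' j : ℕ, ∫ ω, B j ω ∂P :=
  stmt15_general P Z hZmeas hZident B hBmeas hBnonneg hBZindep hBint hBsum n a ε φ ha hε hφ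
end
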